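/- Lebesgue planar measure satisfies the strong Bernstein–Markov inequality on any compact set K ⊂ ℂ that is the closure of its interior and has C¹ boundary; i.e., for every continuous R : K → ℝ and ε > 0 there is C > 0 with sup_K e^{-nR}|p| ≤ C(1+ε)^n ∫_K e^{-nR}|p| dλ for all polynomials p of degree ≤ n. -/

import Mathlib

open MeasureTheory Complex Set Filter
open scoped Topology ENNReal NNReal Real

noncomputable section

def logPlus (t : ℝ) : ℝ := max (Real.log t) 0

def IsSubharmonicFn (u : ℂ → ℝ) : Prop :=
  UpperSemicontinuous u ∧ ∀ (z : ℂ) (r : ℝ), 0 < r →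
    u z ≤ (2 * Real.pi)⁻¹ * ∫ θ in (0:ℝ)..(2 * Real.pi), u (z + r * Complex.exp (θ * Complex.I))

def GreenAdmissible (Y : Set ℂ) (R : ℂ → ℝ) (u : ℂ → ℝ) : Prop :=
  IsSubharmonicFn u ∧ (∀ w ∈ Y, u w ≤ R w) ∧ ∃ C : ℝ, ∀ w, u w ≤ logPlus ‖w‖ + C

def greenFn (Y : Set ℂ) (R : ℂ → ℝ) (z : ℂ) : ℝ :=
  sSup {x | ∃ u, GreenAdmissible Y R u ∧ u z = x}

def RegularSet (K : Set ℂ) : Prop := Continuous (greenFn K 0)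

def energyE (R : ℂ → ℝ) (ν : Measure ℂ) : ℝ :=
  -∫ z, ∫ t, Real.log (‖z - t‖) ∂ν ∂ν + 2 * ∫ z, R z ∂ν

def IsEquilibrium (K : Set ℂ) (R : ℂ → ℝ) (μ : Measure ℂ) : Prop :=
  IsProbabilityMeasure μ ∧ μ Kᶜ = 0 ∧
  ∀ ν : Measure ℂ, IsProbabilityMeasure ν → ν Kᶜ = 0 → energyE R μ ≤ energyE R ν

def msupport (μ : Measure ℂ) : Set ℂ := {z | ∀ U ∈ 𝓝 z, μ U ≠ 0}

def wPoly (R : ℂ → ℝ) (n : ℕ) (p : Polynomial ℂ) (z : ℂ) : ℝ :=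
  Real.exp (-(n : ℝ) * R z) * ‖Polynomial.eval z p‖

def WeightedBM (K : Set ℂ) (R : ℂ → ℝ) (τ : Measure ℂ) : Prop :=
  ∀ ε > 0, ∃ C > 0, ∀ (n : ℕ) (p : Polynomial ℂ), p.natDegree ≤ n →
    ∀ z ∈ K, wPoly R n p z ≤ C * (1 + ε) ^ n * ∫ w in K, wPoly R n p w ∂τ

def Avand (β : ℝ) (Q : ℂ → ℝ) (n : ℕ) (z : Fin n → ℂ) : ℝ :=
  (∏ p ∈ Finset.univ.filter (fun p : Fin n × Fin n => p.1 < p.2), ‖z p.1 - z p.2‖) ^ β *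
    Real.exp (-2 * n * ∑ j, Q (z j))

def Zc (K : Set ℂ) (τ : Measure ℂ) (β : ℝ) (Q : ℂ → ℝ) (n : ℕ) : ℝ :=
  ∫ z in Set.univ.pi (fun _ : Fin n => K), Avand β Q n z ∂(Measure.pi fun _ => τ)

def ProbE (K : Set ℂ) (τ : Measure ℂ) (β : ℝ) (Q : ℂ → ℝ) (n : ℕ) (S : Set (Fin n → ℂ)) : ℝ :=
  (∫ z in S ∩ Set.univ.pi (fun _ : Fin n => K), Avand β Q n z ∂(Measure.pi fun _ => τ)) / Zc K τ β Q n

def countPM {n : ℕ} (hn : n ≠ 0) (z : Fin n → ℂ) : ProbabilityMeasure ℂ :=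
  ⟨(n : ℝ≥0∞)⁻¹ • ∑ j, Measure.dirac (z j), by
    constructor
    simp [Measure.smul_apply, Measure.coe_finset_sum, Finset.sum_apply, measure_univ, smul_eq_mul]
    exact ENNReal.inv_mul_cancel (by exact_mod_cast hn) (by simp)⟩

def Ebeta (β : ℝ) (Q : ℂ → ℝ) (ν : Measure ℂ) : ℝ :=
  -(β/2) * ∫ x, ∫ y, Real.log (‖x - y‖) ∂ν ∂ν + 2 * ∫ x, Q x ∂ν

def IsCompactNbhdIn (K S N : Set ℂ) : Prop :=
  IsCompact N ∧ N ⊆ K ∧ ∃ U : Set ℂ, IsOpen U ∧ S ⊆ U ∧ U ∩ K ⊆ N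

/-! On a disc the estimate is classical: if `|p| ≤ M` on the circle `|ζ - w| = t`, then
`|p| ≤ (s / t) ^ n * M` on the concentric disc of radius `s` (maximum modulus, applied to the
reversed polynomial outside the circle), and `M = |p ζ₀|` is at most the mean of `|p|` over any
disc around `ζ₀` (sub-mean value property). A `C¹` boundary supplies, for every `θ < 1` and all
small `s`, a ball of radius `θ s` inside `K` within distance `s` of each point of `K`. Taking
`s / t = √(1 + ε)`, and `s` so small that `R` oscillates by less than `log √(1 + ε)` over the
relevant disc, both the polynomial growth and the change of weight cost a factor
`(1 + ε) ^ (n / 2)`. -/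

open Metric Polynomial

def InteriorBallWithin {X : Type*} [PseudoMetricSpace X] (K : Set X) (θ s : ℝ) (z : X) : Prop :=
  ∃ w, dist z w ≤ s ∧ closedBall w (θ * s) ⊆ K

lemma eventually_interiorBallWithin_of_mem_interior {X : Type*} [PseudoMetricSpace X]
    {K : Set X} {x : X} (hx : x ∈ interior K) {θ : ℝ} (hθ : θ < 1) :
    ∀ᶠ q : ℝ × X in 𝓝 (0, x), 0 < q.1 → InteriorBallWithin K θ q.1 q.2 := by
  obtain ⟨ε, hε, hεK⟩ := Metric.mem_nhds_iff.mp (mem_interior_iff_mem_nhds.mp hx)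
  filter_upwards [Metric.ball_mem_nhds (0, x) (half_pos hε)] with ⟨s, z⟩ hq hs
  rw [mem_ball, Prod.dist_eq, max_lt_iff] at hq
  obtain ⟨hs', hz⟩ : s < ε / 2 ∧ dist z x < ε / 2 := by simpa [abs_of_pos hs] using hq
  refine ⟨z, by simpa using hs.le, fun w hw => hεK ?_⟩
  have hw : dist w z ≤ θ * s := hw
  calc dist w x ≤ dist w z + dist z x := dist_triangle _ _ _
    _ < ε := by nlinarith

section InteriorBalls

variable {E : Type*} [NormedAddCommGroup E] [NormedSpace ℝ E]

/-- The ball is centred at `z + s • y` for a fixed `y` with `L y < 0`: along it `f` decreases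
at a linear rate, which beats the `o(s)` error of the linear approximation. -/
lemma eventually_interiorBallWithin_of_hasStrictFDerivAt {K : Set E} {f : E → ℝ}
    {L : E →L[ℝ] ℝ} {x : E} (hf : HasStrictFDerivAt f L x) (hL : L ≠ 0)
    (hK : ∀ᶠ y in 𝓝 x, y ∈ K ↔ f y ≤ 0) {θ : ℝ} (hθ : θ < 1) :
    ∀ᶠ q : ℝ × E in 𝓝 (0, x), 0 < q.1 → q.2 ∈ K → InteriorBallWithin K θ q.1 q.2 := by
  have hLpos : 0 < ‖L‖ := norm_pos_iff.mpr hL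
  obtain ⟨y, hy1, hLy⟩ : ∃ y : E, ‖y‖ ≤ 1 ∧ L y ≤ -((1 + θ) / 2 * ‖L‖) := by
    obtain ⟨y, hy1, hLy⟩ := L.exists_lt_apply_of_lt_opNorm (r := (1 + θ) / 2 * ‖L‖) (by nlinarith)
    rcases le_or_gt (L y) 0 with hy | hy
    · exact ⟨y, hy1.le, by rw [Real.norm_eq_abs, abs_of_nonpos hy] at hLy; linarith⟩
    · exact ⟨-y, by simpa using hy1.le,
        by rw [map_neg]; rw [Real.norm_eq_abs, abs_of_pos hy] at hLy; linarith⟩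
  set κ : ℝ := (1 - θ) * ‖L‖ / 4 with hκ
  have hκpos : 0 < κ := by rw [hκ]; nlinarith
  obtain ⟨U, hU, hfU⟩ := hf.approximates_deriv_on_nhds (c := ⟨κ, hκpos.le⟩) (Or.inr hκpos)
  obtain ⟨m, hm, hmK⟩ := Metric.mem_nhds_iff.mp (inter_mem hU hK)
  filter_upwards [Metric.ball_mem_nhds (0, x) (by positivity : 0 < m / 3)]
    with ⟨s, z⟩ hq hs hzK
  rw [mem_ball, Prod.dist_eq, max_lt_iff] at hq
  obtain ⟨hs', hz⟩ : s < m / 3 ∧ dist z x < m / 3 := by simpa [abs_of_pos hs] using hq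
  have hsy : ‖s • y‖ ≤ s := by
    rw [norm_smul, Real.norm_of_nonneg hs.le]; exact mul_le_of_le_one_right hs.le hy1
  refine ⟨z + s • y, by simpa [dist_eq_norm] using hsy, fun w hw => ?_⟩
  have hw : ‖w - (z + s • y)‖ ≤ θ * s := mem_closedBall_iff_norm.mp hw
  have hsplit : w - z = (w - (z + s • y)) + s • y := by abel
  have hwz : ‖w - z‖ ≤ 2 * s := by
    rw [hsplit]; nlinarith [norm_add_le (w - (z + s • y)) (s • y)]
  have hwx : dist w x < m := by
    linarith [dist_triangle w z x, (dist_eq_norm w z).symm ▸ hwz]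
  have hzUK := hmK (show z ∈ ball x m by rw [mem_ball]; linarith)
  have hwUK := hmK hwx
  have hLwz : L (w - z) ≤ -(2 * κ * s) := by
    rw [hsplit, map_add, map_smul, smul_eq_mul]
    have := (le_abs_self _).trans ((L.le_opNorm _).trans (mul_le_mul_of_nonneg_left hw hLpos.le))
    nlinarith
  have hfw : f w - f z - L (w - z) ≤ κ * ‖w - z‖ :=
    (abs_le.mp (Real.norm_eq_abs _ ▸ hfU w hwUK.1 z hzUK.1)).2
  have hfz : f z ≤ 0 := (hzUK.2).mp hzK
  refine (hwUK.2).mpr ?_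
  nlinarith

lemma IsCompact.eventually_interiorBallWithin {K : Set E} (hK : IsCompact K)
    (hC1 : ∀ x ∈ frontier K, ∃ f : E → ℝ, ContDiffAt ℝ 1 f x ∧ fderiv ℝ f x ≠ 0 ∧
      ∀ᶠ y in 𝓝 x, (y ∈ K ↔ f y ≤ 0))
    {θ : ℝ} (hθ : θ < 1) :
    ∀ᶠ s in 𝓝[>] (0 : ℝ), ∀ z ∈ K, InteriorBallWithin K θ s z := by
  have hloc : ∀ x ∈ K,
      ∀ᶠ q : ℝ × E in 𝓝 (0, x), 0 < q.1 → q.2 ∈ K → InteriorBallWithin K θ q.1 q.2 := by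
    intro x hxK
    by_cases hx : x ∈ interior K
    · filter_upwards [eventually_interiorBallWithin_of_mem_interior hx hθ] with q hq hs _
      exact hq hs
    · obtain ⟨f, hf, hL, hfK⟩ := hC1 x ⟨subset_closure hxK, hx⟩
      exact eventually_interiorBallWithin_of_hasStrictFDerivAt
        (hf.hasStrictFDerivAt one_ne_zero) hL hfK hθ
  filter_upwards [eventually_nhdsWithin_of_eventually_nhds
      (hK.eventually_forall_of_forall_eventually
        (P := fun s z => 0 < s → z ∈ K → InteriorBallWithin K θ s z) hloc), self_mem_nhdsWithin]
    with s hs hspos z hz using hs z hz hspos hz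

end InteriorBalls

/-- Rotating by `exp (iπ/k)` preserves the disc and multiplies `w ^ k` by `-1`. -/
lemma setIntegral_closedBall_zero_pow_eq_zero (r : ℝ) {k : ℕ} (hk : k ≠ 0) :
    ∫ w in closedBall (0 : ℂ) r, w ^ k = 0 := by
  set a : Circle := Circle.exp (π / k)
  have hak : (a : ℂ) ^ k = -1 := by
    rw [Circle.coe_exp, ← Complex.exp_nat_mul, ← Complex.exp_pi_mul_I]
    congr 1
    push_cast
    field_simp
  have hrot : ⇑(rotation a) ⁻¹' closedBall 0 r = closedBall 0 r := by
    ext w; simp only [mem_preimage, mem_closedBall_zero_iff, rotation_apply, norm_mul,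
      Circle.norm_coe, one_mul]
  have key := (rotation a).measurePreserving.setIntegral_preimage_emb
    (rotation a).toHomeomorph.measurableEmbedding (fun w => w ^ k) (closedBall 0 r)
  simp only [hrot, rotation_apply, mul_pow, hak, integral_const_mul] at key
  linear_combination -key / 2

lemma Polynomial.setIntegral_closedBall_eval (p : ℂ[X]) (c : ℂ) {r : ℝ} (hr : 0 ≤ r) :
    ∫ w in closedBall c r, p.eval w = (π * r ^ 2 : ℝ) • p.eval c := by
  have htrans : (c + ·) ⁻¹' closedBall c r = closedBall (0 : ℂ) r := by
    ext w; simp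
  rw [← (measurePreserving_add_left volume c).setIntegral_preimage_emb
    (Homeomorph.addLeft c).measurableEmbedding, htrans]
  set q := taylor c p
  have hq : ∀ w, p.eval (c + w) = ∑ i ∈ Finset.range (q.natDegree + 1), q.coeff i * w ^ i :=
    fun w => by rw [← eval_eq_sum_range, taylor_eval, add_comm]
  simp_rw [hq]
  rw [integral_finsetSum _ fun i _ => (by fun_prop : Continuous fun w : ℂ => q.coeff i * w ^ i)
    |>.continuousOn.integrableOn_compact (isCompact_closedBall 0 r), Finset.sum_eq_single 0]
  · simp only [pow_zero, mul_one, setIntegral_const, measureReal_def, Complex.volume_closedBall]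
    simp [q, hr, taylor_coeff_zero, mul_comm]
  · intro i _ hi
    rw [integral_const_mul, setIntegral_closedBall_zero_pow_eq_zero r hi, mul_zero]
  · simp

lemma Polynomial.mul_norm_eval_le_setIntegral_closedBall (p : ℂ[X]) (c : ℂ) {r : ℝ} (hr : 0 ≤ r) :
    π * r ^ 2 * ‖p.eval c‖ ≤ ∫ w in closedBall c r, ‖p.eval w‖ := by
  calc π * r ^ 2 * ‖p.eval c‖ = ‖∫ w in closedBall c r, p.eval w‖ := by
        rw [setIntegral_closedBall_eval p c hr, norm_smul, Real.norm_of_nonneg (by positivity)]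
    _ ≤ ∫ w in closedBall c r, ‖p.eval w‖ := norm_integral_le_integral_norm _

lemma Polynomial.eval_reflect_taylor_inv_mul_pow {𝕜 : Type*} [Field 𝕜] {p : 𝕜[X]} {n : ℕ}
    (hp : p.natDegree ≤ n) (w : 𝕜) {u : 𝕜} (hu : u ≠ 0) :
    (reflect n (taylor w p)).eval u⁻¹ * u ^ n = p.eval (w + u) := by
  let := invertibleOfNonzero hu
  have := eval₂_reflect_mul_pow (RingHom.id 𝕜) u n (taylor w p) (by rwa [natDegree_taylor])
  rwa [invOf_eq_inv, eval₂_id, eval₂_id, taylor_eval, add_comm] at this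

lemma Polynomial.norm_eval_le_of_forall_mem_sphere_of_dist_le (p : ℂ[X]) {w z : ℂ} {t M : ℝ}
    (ht : 0 < t) (hM : ∀ ζ ∈ sphere w t, ‖p.eval ζ‖ ≤ M) (hz : dist z w ≤ t) :
    ‖p.eval z‖ ≤ M :=
  Complex.norm_le_of_forall_mem_frontier_norm_le isBounded_ball p.differentiable.diffContOnCl
    (by rwa [frontier_ball w ht.ne']) (by rwa [closure_ball w ht.ne'])

/-- Outside the disc, `u ↦ u ^ n p (w + 1/u)` is a polynomial to which the maximum modulus
principle applies on the inverted disc. -/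
lemma Polynomial.norm_eval_le_of_forall_mem_sphere_of_le_dist {p : ℂ[X]} {n : ℕ}
    (hp : p.natDegree ≤ n) {w z : ℂ} {t M : ℝ} (ht : 0 < t)
    (hM : ∀ ζ ∈ sphere w t, ‖p.eval ζ‖ ≤ M) (hz : t ≤ dist z w) :
    ‖p.eval z‖ ≤ (dist z w / t) ^ n * M := by
  set q := reflect n (taylor w p)
  have hzw : 0 < ‖z - w‖ := by rw [← dist_eq_norm]; linarith
  have hq : ∀ v ∈ sphere (0 : ℂ) t⁻¹, ‖q.eval v‖ ≤ t⁻¹ ^ n * M := by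
    intro v hv
    have hvn : ‖v‖ = t⁻¹ := by simpa using hv
    have hv0 : v ≠ 0 := norm_pos_iff.mp (hvn ▸ inv_pos.mpr ht)
    have h : q.eval v * v⁻¹ ^ n = p.eval (w + v⁻¹) := by
      simpa only [inv_inv] using eval_reflect_taylor_inv_mul_pow hp w (inv_ne_zero hv0)
    have hw : w + v⁻¹ ∈ sphere w t := by simp [hvn]
    calc ‖q.eval v‖ = ‖v‖ ^ n * ‖p.eval (w + v⁻¹)‖ := by
          have : ‖v‖ ≠ 0 := norm_ne_zero_iff.mpr hv0
          rw [← h, norm_mul, norm_pow, norm_inv, mul_left_comm, ← mul_pow, mul_inv_cancel₀ this,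
            one_pow, mul_one]
      _ ≤ t⁻¹ ^ n * M := by rw [hvn]; gcongr; exact hM _ hw
  have hzq := q.norm_eval_le_of_forall_mem_sphere_of_dist_le (inv_pos.mpr ht) hq
    (z := (z - w)⁻¹) (by simpa [dist_eq_norm] using inv_anti₀ ht (dist_eq_norm z w ▸ hz))
  have hpz := eval_reflect_taylor_inv_mul_pow hp w (norm_pos_iff.mp hzw)
  rw [add_sub_cancel] at hpz
  calc ‖p.eval z‖ = ‖q.eval (z - w)⁻¹‖ * ‖z - w‖ ^ n := by rw [← hpz, norm_mul, norm_pow]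
    _ ≤ t⁻¹ ^ n * M * ‖z - w‖ ^ n := by gcongr
    _ = (dist z w / t) ^ n * M := by rw [dist_eq_norm]; ring

lemma Polynomial.norm_eval_le_of_forall_mem_sphere {p : ℂ[X]} {n : ℕ} (hp : p.natDegree ≤ n)
    {w z : ℂ} {t s M : ℝ} (ht : 0 < t) (hts : t ≤ s) (hM : ∀ ζ ∈ sphere w t, ‖p.eval ζ‖ ≤ M)
    (hz : dist z w ≤ s) :
    ‖p.eval z‖ ≤ (s / t) ^ n * M := by
  obtain ⟨ζ, hζ⟩ := (NormedSpace.sphere_nonempty (x := w)).mpr ht.le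
  have hM0 : 0 ≤ M := (norm_nonneg _).trans (hM ζ hζ)
  rcases le_or_gt (dist z w) t with hzt | hzt
  · calc ‖p.eval z‖ ≤ M := p.norm_eval_le_of_forall_mem_sphere_of_dist_le ht hM hzt
      _ ≤ (s / t) ^ n * M := le_mul_of_one_le_left hM0 (one_le_pow₀ ((one_le_div ht).mpr hts))
  · calc ‖p.eval z‖ ≤ (dist z w / t) ^ n * M :=
          norm_eval_le_of_forall_mem_sphere_of_le_dist hp ht hM hzt.le
      _ ≤ (s / t) ^ n * M := by gcongr

/-- `ζ` is a point where `‖p‖` is maximal on `sphere w t`. -/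
lemma Polynomial.exists_norm_eval_le_setIntegral_closedBall {p : ℂ[X]} {n : ℕ}
    (hp : p.natDegree ≤ n) {w z : ℂ} {t s r : ℝ} (ht : 0 < t) (hts : t ≤ s) (hr : 0 < r)
    (hz : dist z w ≤ s) :
    ∃ ζ ∈ sphere w t,
      ‖p.eval z‖ ≤ (s / t) ^ n * (π * r ^ 2)⁻¹ * ∫ ξ in closedBall ζ r, ‖p.eval ξ‖ := by
  obtain ⟨ζ, hζ, hmax⟩ := (isCompact_sphere w t).exists_isMaxOn
    ((NormedSpace.sphere_nonempty (x := w)).mpr ht.le) p.continuous.norm.continuousOn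
  refine ⟨ζ, hζ, (norm_eval_le_of_forall_mem_sphere hp ht hts (fun ξ hξ => hmax hξ) hz).trans ?_⟩
  rw [mul_assoc]
  refine mul_le_mul_of_nonneg_left ?_ (pow_pos (div_pos (ht.trans_le hts) ht) n).le
  rw [le_inv_mul_iff₀ (by positivity)]
  exact mul_norm_eval_le_setIntegral_closedBall p ζ hr.le

lemma setIntegral_le_exp_mul_setIntegral_exp_neg_mul {X : Type*} [MeasurableSpace X]
    {μ : Measure X} {D K : Set X} {g R : X → ℝ} {τ c : ℝ} (hD : MeasurableSet D) (hDK : D ⊆ K)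
    (hτ : 0 ≤ τ) (hg : ∀ x, 0 ≤ g x) (hint : IntegrableOn (fun x => Real.exp (-τ * R x) * g x) K μ)
    (hR : ∀ x ∈ D, R x ≤ c) :
    ∫ x in D, g x ∂μ ≤ Real.exp (τ * c) * ∫ x in K, Real.exp (-τ * R x) * g x ∂μ := by
  have hpt : ∀ x ∈ D, g x ≤ Real.exp (τ * c) * (Real.exp (-τ * R x) * g x) := fun x hx => by
    rw [← mul_assoc, ← Real.exp_add]
    refine le_mul_of_one_le_left (hg x) (Real.one_le_exp_iff.mpr ?_)
    nlinarith [hR x hx]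
  calc ∫ x in D, g x ∂μ ≤ ∫ x in D, Real.exp (τ * c) * (Real.exp (-τ * R x) * g x) ∂μ :=
        integral_mono_of_nonneg (ae_of_all _ hg) ((hint.mono_set hDK).const_mul _)
          (ae_restrict_of_forall_mem hD hpt)
    _ = Real.exp (τ * c) * ∫ x in D, Real.exp (-τ * R x) * g x ∂μ := integral_const_mul _ _
    _ ≤ Real.exp (τ * c) * ∫ x in K, Real.exp (-τ * R x) * g x ∂μ :=
        mul_le_mul_of_nonneg_left (setIntegral_mono_set hint
          (ae_of_all _ fun x => mul_nonneg (Real.exp_pos _).le (hg x)) hDK.eventuallyLE)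
          (Real.exp_pos _).le

lemma InteriorBallWithin.exists_closedBall_norm_eval_le {K : Set ℂ} {β s : ℝ} {z : ℂ}
    (hz : InteriorBallWithin K ((1 + β⁻¹) / 2) s z) (hβ : 1 < β) (hs : 0 < s)
    {p : ℂ[X]} {n : ℕ} (hp : p.natDegree ≤ n) :
    ∃ ζ, closedBall ζ ((1 - β⁻¹) / 2 * s) ⊆ K ∩ closedBall z (2 * s) ∧
      ‖p.eval z‖ ≤ β ^ n * (π * ((1 - β⁻¹) / 2 * s) ^ 2)⁻¹ *
        ∫ ξ in closedBall ζ ((1 - β⁻¹) / 2 * s), ‖p.eval ξ‖ := by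
  obtain ⟨w, hzw, hwK⟩ := hz
  have hβ' : β⁻¹ < 1 := inv_lt_one_of_one_lt₀ hβ
  obtain ⟨ζ, hζ, hpz⟩ := p.exists_norm_eval_le_setIntegral_closedBall hp (t := β⁻¹ * s)
    (r := (1 - β⁻¹) / 2 * s) (by positivity) (mul_le_of_le_one_left hs.le hβ'.le) (by nlinarith) hzw
  rw [show s / (β⁻¹ * s) = β by field_simp] at hpz
  have hD : closedBall ζ ((1 - β⁻¹) / 2 * s) ⊆ closedBall w ((1 + β⁻¹) / 2 * s) :=
    closedBall_subset_closedBall' (by rw [mem_sphere.mp hζ]; linarith)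
  refine ⟨ζ, subset_inter (hD.trans hwK) (hD.trans (closedBall_subset_closedBall' ?_)), hpz⟩
  rw [dist_comm]
  nlinarith

theorem stmt7_general (K : Set ℂ) (hKc : IsCompact K)
    (hC1bd : ∀ x ∈ frontier K, ∃ f : ℂ → ℝ, ContDiffAt ℝ 1 f x ∧ fderiv ℝ f x ≠ 0 ∧
      ∀ᶠ y in 𝓝 x, (y ∈ K ↔ f y ≤ 0)) :
    ∀ R : ℂ → ℝ, ContinuousOn R K →
    ∀ ε > 0, ∃ C > 0, ∀ (n : ℕ) (p : Polynomial ℂ), p.natDegree ≤ n →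
      ∀ z ∈ K, Real.exp (-(n : ℝ) * R z) * ‖p.eval z‖ ≤
        C * (1 + ε) ^ n *
          ∫ w in K, Real.exp (-(n : ℝ) * R w) * ‖p.eval w‖ := by
  intro R hR ε hε
  set β := √(1 + ε)
  have hβ : 1 < β := Real.lt_sqrt_of_sq_lt (by linarith)
  obtain ⟨δ, hδ, hRδ⟩ := Metric.uniformContinuousOn_iff.mp
    (hKc.uniformContinuousOn_of_continuous hR) _ (Real.log_pos hβ)
  have hθ : (1 + β⁻¹) / 2 < 1 := by linarith [inv_lt_one_of_one_lt₀ hβ]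
  obtain ⟨s, ⟨hballs, hsδ⟩, hs⟩ := (((hKc.eventually_interiorBallWithin hC1bd hθ).and
    (nhdsWithin_le_nhds (eventually_lt_nhds (half_pos hδ)))).and self_mem_nhdsWithin).exists
  set r := (1 - β⁻¹) / 2 * s
  have hr : 0 < r := mul_pos (by linarith) hs
  refine ⟨(π * r ^ 2)⁻¹, by positivity, fun n p hp z hz => ?_⟩
  obtain ⟨ζ, hDK, hpz⟩ := (hballs z hz).exists_closedBall_norm_eval_le hβ hs hp
  have hRD : ∀ ξ ∈ closedBall ζ r, R ξ ≤ R z + Real.log β := fun ξ hξ =>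
    have hξz : dist ξ z < δ := by linarith [mem_closedBall.mp (hDK hξ).2]
    by linarith [(abs_lt.mp (hRδ ξ (hDK hξ).1 z hz hξz)).2]
  have hI := setIntegral_le_exp_mul_setIntegral_exp_neg_mul measurableSet_closedBall
    (hDK.trans inter_subset_left) n.cast_nonneg (fun ξ => norm_nonneg (p.eval ξ))
    (ContinuousOn.integrableOn_compact (μ := volume) hKc (by fun_prop)) hRD
  set I := ∫ ξ in K, Real.exp (-(n : ℝ) * R ξ) * ‖p.eval ξ‖
  calc Real.exp (-(n : ℝ) * R z) * ‖p.eval z‖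
      ≤ Real.exp (-(n : ℝ) * R z) *
          (β ^ n * (π * r ^ 2)⁻¹ * (Real.exp (n * (R z + Real.log β)) * I)) := by
        gcongr
        exact hpz.trans (by gcongr)
    _ = (π * r ^ 2)⁻¹ * (1 + ε) ^ n * I := by
        rw [mul_add, Real.exp_add, ← Real.log_pow, Real.exp_log (by positivity),
          ← Real.sq_sqrt (by linarith : 0 ≤ 1 + ε), neg_mul, Real.exp_neg]
        field_simp
        ring

theorem stmt7 (K : Set ℂ) (hKc : IsCompact K) (hKint : closure (interior K) = K)
    (hC1bd : ∀ x ∈ frontier K, ∃ f : ℂ → ℝ, ContDiffAt ℝ 1 f x ∧ fderiv ℝ f x ≠ 0 ∧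
      ∀ᶠ y in 𝓝 x, (y ∈ K ↔ f y ≤ 0)) :
    ∀ R : ℂ → ℝ, ContinuousOn R K →
    ∀ ε > 0, ∃ C > 0, ∀ (n : ℕ) (p : Polynomial ℂ), p.natDegree ≤ n →
      ∀ z ∈ K, Real.exp (-(n : ℝ) * R z) * ‖p.eval z‖ ≤
        C * (1 + ε) ^ n *
          ∫ w in K, Real.exp (-(n : ℝ) * R w) * ‖p.eval w‖ :=
  stmt7_general K hKc hC1bd
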